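/- Let A = (a_{ij}) be an n×n multiparameter quantum matrix over R with the (p,λ)-condition, and let x_1,…,x_n ∈ R satisfy the q-exterior relations, with every a_{ij} commuting with every x_k. Set δ_i = Σ_{j=1}^n a_{ij} x_j. Then for any row indices i_1,…,i_t (not necessarily distinct or ordered), δ_{i_1} δ_{i_2} ⋯ δ_{i_t} = Σ_{1 ≤ j_1 < j_2 < ⋯ < j_t ≤ n} det_q(A^{i_1…i_t}_{j_1…j_t}) · x_{j_1} x_{j_2} ⋯ x_{j_t}. -/

import Mathlib

open Finset

noncomputable section

attribute [local instance] Classical.propDecidable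

/-- Ordered product `f 0 * f 1 * ... * f (n-1)` of noncommuting elements. -/
def ordProd {R : Type*} [Monoid R] {n : ℕ} (f : Fin n → R) : R :=
  (List.ofFn f).prod

/-- The generalized sign `(−q)_σ` with column labels `cols`:
`(−1)^{ℓ(σ)} ∏_{k<k', σ(k)>σ(k')} q_{cols(σ(k')) cols(σ(k))}`. -/
def qSign {N t : ℕ} (q : Fin N → Fin N → ℂ) (cols : Fin t → Fin N)
    (σ : Equiv.Perm (Fin t)) : ℂ :=
  ∏ ij ∈ Finset.univ.filter
      (fun ij : Fin t × Fin t => ij.1 < ij.2 ∧ σ ij.2 < σ ij.1),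
    (-(q (cols (σ ij.2)) (cols (σ ij.1))))

/-- The quantum minor `det_q(A^{rows}_{cols})`. -/
def qMinor {R : Type*} [Ring R] [Algebra ℂ R] {N t : ℕ}
    (q : Fin N → Fin N → ℂ) (rows cols : Fin t → Fin N)
    (a : Fin N → Fin N → R) : R :=
  ∑ σ : Equiv.Perm (Fin t),
    qSign q cols σ • ordProd (fun k => a (rows k) (cols (σ k)))

/-- Quantum row determinant `rdet(A) = Σ_σ (−q)_σ a_{1σ(1)} ⋯ a_{nσ(n)}`. -/
def rdet {R : Type*} [Ring R] [Algebra ℂ R] {N : ℕ}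
    (q : Fin N → Fin N → ℂ) (a : Fin N → Fin N → R) : R :=
  ∑ σ : Equiv.Perm (Fin N),
    qSign q id σ • ordProd (fun i => a i (σ i))

/-- Quantum column determinant `cdet(A) = Σ_σ (−p)_σ a_{σ(1)1} ⋯ a_{σ(n)n}`. -/
def cdet {R : Type*} [Ring R] [Algebra ℂ R] {N : ℕ}
    (p : Fin N → Fin N → ℂ) (a : Fin N → Fin N → R) : R :=
  ∑ σ : Equiv.Perm (Fin N),
    qSign p id σ • ordProd (fun i => a (σ i) i)

/-- Conditions on the parameters: they are nonzero, `p_{ii} = q_{ii} = 1`,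
and `p_{ij}p_{ji} = q_{ij}q_{ji} = 1`. -/
def ParamConds {N : ℕ} (p q : Fin N → Fin N → ℂ) : Prop :=
  (∀ i j, p i j ≠ 0 ∧ q i j ≠ 0) ∧
  (∀ i, p i i = 1 ∧ q i i = 1) ∧
  (∀ i j, p i j * p j i = 1 ∧ q i j * q j i = 1)

/-- The `(p,λ)`-condition: `p_{ij} q_{ij} = λ` for `i < j`. -/
def PLambdaCond {N : ℕ} (p q : Fin N → Fin N → ℂ) (lam : ℂ) : Prop :=
  ∀ i j : Fin N, i < j → p i j * q i j = lam

/-- `A = (a_{ij})` is a multiparameter quantum matrix for the parameters `p, q`. -/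
def IsQuantumMatrix {R : Type*} [Ring R] [Algebra ℂ R] {N : ℕ}
    (p q : Fin N → Fin N → ℂ) (a : Fin N → Fin N → R) : Prop :=
  (∀ i k l : Fin N, k < l → a i k * a i l = q k l • (a i l * a i k)) ∧
  (∀ i j k : Fin N, i < j → a i k * a j k = p i j • (a j k * a i k)) ∧
  (∀ i j k l : Fin N, i < j → k < l →
    a i k * a j l - (q k l / q i j) • (a j l * a i k)
      = q k l • (a i l * a j k) - (q i j)⁻¹ • (a j k * a i l)) ∧
  (∀ i j k l : Fin N, i < j → k < l →
    a i k * a j l - (p i j / p k l) • (a j l * a i k)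
      = p i j • (a j k * a i l) - (p k l)⁻¹ • (a i l * a j k))

/-- `x_1, …, x_n` satisfy the `q`-exterior relations. -/
def QExterior {R : Type*} [Ring R] [Algebra ℂ R] {N : ℕ}
    (q : Fin N → Fin N → ℂ) (x : Fin N → R) : Prop :=
  (∀ i, x i * x i = 0) ∧
  (∀ i j : Fin N, i < j → x j * x i = -(q i j) • (x i * x j))

/-- The quantum integer `[k]_λ = 1 + λ + ⋯ + λ^{k−1}`. -/
def qNum (lam : ℂ) (k : ℕ) : ℂ := ∑ i ∈ Finset.range k, lam ^ i

/-- The quantum factorial `[n]_λ! = [1]_λ [2]_λ ⋯ [n]_λ`. -/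
def qFact (lam : ℂ) (n : ℕ) : ℂ := ∏ k ∈ Finset.range n, qNum lam (k + 1)

/-- The index `2i−1` (1-based), i.e. position `2i` (0-based), inside `Fin (2n)`. -/
def pfIdx1 {n : ℕ} (i : Fin n) : Fin (2 * n) :=
  ⟨2 * i.1, by have := i.isLt; omega⟩

/-- The index `2i` (1-based), i.e. position `2i+1` (0-based), inside `Fin (2n)`. -/
def pfIdx2 {n : ℕ} (i : Fin n) : Fin (2 * n) :=
  ⟨2 * i.1 + 1, by have := i.isLt; omega⟩

/-- The multiparameter quantum Pfaffian
`Pf_q(B) = Σ_σ (−q)_σ b_{σ(1)σ(2)} ⋯ b_{σ(2n−1)σ(2n)}`, the sum over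
permutations `σ` of `{1,…,2n}` with `σ(2i−1) < σ(2i)` for all `i`. -/
def Pf {R : Type*} [Ring R] [Algebra ℂ R] {n : ℕ}
    (q : Fin (2 * n) → Fin (2 * n) → ℂ) (b : Fin (2 * n) → Fin (2 * n) → R) : R :=
  ∑ σ ∈ Finset.univ.filter
      (fun σ : Equiv.Perm (Fin (2 * n)) => ∀ i : Fin n, σ (pfIdx1 i) < σ (pfIdx2 i)),
    qSign q id σ • ordProd (fun i : Fin n => b (σ (pfIdx1 i)) (σ (pfIdx2 i)))

/-- Sub-Pfaffian along an index map `f` (typically the increasing enumeration of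
a subset of the indices): the parameters and the entries are restricted along `f`. -/
def PfOn {R : Type*} [Ring R] [Algebra ℂ R] {N m : ℕ}
    (q : Fin N → Fin N → ℂ) (b : Fin N → Fin N → R) (f : Fin (2 * m) → Fin N) : R :=
  Pf (fun i j => q (f i) (f j)) (fun i j => b (f i) (f j))

/-- `inv(I, J) = ∏_{i ∈ I, j ∈ J, i > j} (−q_{ji})`. -/
def invQ {N : ℕ} (q : Fin N → Fin N → ℂ) (I J : Finset (Fin N)) : ℂ :=
  ∏ i ∈ I, ∏ j ∈ J, if j < i then -(q j i) else 1

/-- The position `k·m + r` within `Fin (m·n)`, i.e. the `r`-th index of the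
`k`-th block of size `m`. -/
def blockIdx {m n : ℕ} (k : Fin n) (r : Fin m) : Fin (m * n) :=
  ⟨k.1 * m + r.1, by
    have hk : k.1 + 1 ≤ n := k.isLt
    have hr : r.1 < m := r.isLt
    calc k.1 * m + r.1 < k.1 * m + m := Nat.add_lt_add_left hr _
      _ = (k.1 + 1) * m := (Nat.succ_mul k.1 m).symm
      _ ≤ n * m := Nat.mul_le_mul hk (Nat.le_refl m)
      _ = m * n := Nat.mul_comm n m⟩

/-- The multiparameter quantum hyper-Pfaffian
`Pf_q(B) = Σ_{σ∈Π} (−q)_σ b_{σ(1)…σ(m)} ⋯ b_{σ(m(n−1)+1)…σ(mn)}`, where `Π` is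
the set of permutations of `{1,…,mn}` increasing on each consecutive block of
length `m`. -/
def hPf {R : Type*} [Ring R] [Algebra ℂ R] {m n : ℕ}
    (q : Fin (m * n) → Fin (m * n) → ℂ) (b : (Fin m → Fin (m * n)) → R) : R :=
  ∑ σ ∈ Finset.univ.filter
      (fun σ : Equiv.Perm (Fin (m * n)) =>
        ∀ k : Fin n, StrictMono (fun r : Fin m => σ (blockIdx k r))),
    qSign q id σ • ordProd (fun k : Fin n => b (fun r => σ (blockIdx k r)))

/-- The increasing enumeration of `{1,…,n} \ {k}` (the "hat" of `k`). -/
def hatIdx {n : ℕ} (k : Fin n) (r : Fin (n - 1)) : Fin n :=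
  if h : r.1 < k.1 then ⟨r.1, by have := k.isLt; omega⟩
  else ⟨r.1 + 1, by have := r.isLt; omega⟩

/-- The increasing enumeration of `{s+1,…,n}`. -/
def tailIdx {n : ℕ} (s : ℕ) (k : Fin (n - s)) : Fin n :=
  ⟨s + k.1, by have := k.isLt; omega⟩

/-- The increasing enumeration of `{1,…,t}` inside `{1,…,n}`. -/
def headIdx {n : ℕ} (t : ℕ) (ht : t ≤ n) (k : Fin t) : Fin n :=
  ⟨k.1, lt_of_lt_of_le k.isLt ht⟩

/-- `σ` is a `t`-shuffle: `σ(1) < ⋯ < σ(t)` and `σ(t+1) < ⋯ < σ(n)`. -/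
def IsShuffle {n : ℕ} (t : ℕ) (σ : Equiv.Perm (Fin n)) : Prop :=
  (∀ k l : Fin n, k < l → l.1 < t → σ k < σ l) ∧
  (∀ k l : Fin n, k < l → t ≤ k.1 → σ k < σ l)

/-! Expanding the product of the `δ`'s distributes it over all maps `g : Fin t → Fin n`, and
since the `a`'s commute with the `x`'s, each term is
`(a_{i₁ g(1)} ⋯ a_{i_t g(t)}) · x_{g(1)} ⋯ x_{g(t)}`. Sorting `x_{g(1)} ⋯ x_{g(t)}` by adjacent
`q`-commutations either brings two equal factors together, which kills the term when `g` is not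
injective, or, writing an injective `g` uniquely as `c ∘ σ` with `c` increasing, removes one
inversion of `σ` at a time and so produces exactly the coefficient `(−q)_σ` of the quantum
minor. -/

section OrdProd

variable {R : Type*}

theorem ordProd_succ [Monoid R] {t : ℕ} (f : Fin (t + 1) → R) :
    ordProd f = f 0 * ordProd fun i => f i.succ := by
  simp [ordProd, List.ofFn_succ]

theorem ordProd_mul_of_commute [Monoid R] : ∀ {t : ℕ} (f g : Fin t → R),
    (∀ k l, Commute (g k) (f l)) → ordProd (fun k => f k * g k) = ordProd f * ordProd g
  | 0, _, _, _ => by simp [ordProd]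
  | t + 1, f, g, h => by
    have hcomm : Commute (g 0) (ordProd fun i => f i.succ) :=
      Commute.list_prod_right _ _ fun y hy => by
        obtain ⟨i, rfl⟩ := List.mem_ofFn.1 hy
        exact h 0 i.succ
    rw [ordProd_succ, ordProd_succ f, ordProd_succ g,
      ordProd_mul_of_commute _ _ fun k l => h k.succ l.succ]
    simp only [mul_assoc]
    rw [hcomm.left_comm]

theorem ordProd_sum [Semiring R] {ι : Type*} [Fintype ι] : ∀ {t : ℕ} (f : Fin t → ι → R),
    ordProd (fun k => ∑ j, f k j) = ∑ g : Fin t → ι, ordProd fun k => f k (g k)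
  | 0, f => by simp [ordProd]
  | t + 1, f => by
    rw [ordProd_succ, ordProd_sum, sum_mul_sum, ← (Fin.consEquiv fun _ => ι).sum_comp,
      Fintype.sum_prod_type]
    simp [ordProd_succ, Fin.consEquiv]

section Smul

variable {S : Type*} [Monoid R] [SMul S R] [IsScalarTower S R R] [SMulCommClass S R R]

theorem ordProd_eq_smul_comp_swap : ∀ {t : ℕ} (f : Fin (t + 1) → R) (k : Fin t) (c : S),
    f k.castSucc * f k.succ = c • (f k.succ * f k.castSucc) →
    ordProd f = c • ordProd (f ∘ Equiv.swap k.castSucc k.succ)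
  | 0, _, k, _, _ => k.elim0
  | t + 1, f, k, c, h => by
    cases k using Fin.cases with
    | zero =>
      simp only [ordProd_succ (f ∘ _), ordProd_succ (fun i => (f ∘ _) i.succ)]
      rw [ordProd_succ, ordProd_succ fun i => f i.succ]
      have hfix (i : Fin t) : Equiv.swap (0 : Fin (t + 2)) 1 i.succ.succ = i.succ.succ :=
        Equiv.swap_apply_of_ne_of_ne (Fin.succ_ne_zero _) (Fin.succ_succ_ne_one _)
      simp only [Function.comp_apply, Fin.succ_zero_eq_one, Equiv.swap_apply_left,
        Equiv.swap_apply_right, hfix, Fin.castSucc_zero] at h ⊢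
      rw [← mul_assoc, h, smul_mul_assoc, mul_assoc]
    | succ k =>
      rw [ordProd_succ, ordProd_eq_smul_comp_swap (fun i => f i.succ) k c h,
        ordProd_succ (f ∘ _), mul_smul_comm]
      simp [Function.comp_def, Fin.succ_injective _ |>.swap_apply,
        Equiv.swap_apply_of_ne_of_ne (Fin.succ_ne_zero _).symm (Fin.succ_ne_zero _).symm]

end Smul

theorem ordProd_eq_zero_of_mul_eq_zero [Semiring R] {t : ℕ} {f : Fin (t + 1) → R} (k : Fin t)
    (h : f k.castSucc * f k.succ = 0) : ordProd f = 0 := by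
  simpa using ordProd_eq_smul_comp_swap f k (0 : ℕ) (by simpa using h)

end OrdProd

theorem Monotone.exists_castSucc_eq_succ {α : Type*} [PartialOrder α] {t : ℕ}
    {g : Fin (t + 1) → α} (hg : Monotone g) (hinj : ¬ Function.Injective g) :
    ∃ k : Fin t, g k.castSucc = g k.succ := by
  rw [← hg.strictMono_iff_injective, Fin.strictMono_iff_lt_succ] at hinj
  simp only [not_forall] at hinj
  obtain ⟨k, hk⟩ := hinj
  exact ⟨k, (hg (Fin.castSucc_le_succ k)).eq_of_not_lt hk⟩

theorem Equiv.Perm.exists_succ_lt_castSucc {t : ℕ} {σ : Equiv.Perm (Fin (t + 1))}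
    (hσ : σ ≠ 1) : ∃ k : Fin t, σ k.succ < σ k.castSucc := by
  by_contra! h
  exact hσ (σ.monotone_iff.1 (Fin.monotone_iff_le_succ.2 h))

theorem Fin.swap_castSucc_succ_lt_swap_iff {t : ℕ} {k : Fin t} {i j : Fin (t + 1)}
    (h : ¬(i = k.castSucc ∧ j = k.succ ∨ i = k.succ ∧ j = k.castSucc)) :
    Equiv.swap k.castSucc k.succ i < Equiv.swap k.castSucc k.succ j ↔ i < j := by
  simp only [Equiv.swap_apply_def]
  split_ifs <;> simp only [Fin.lt_def, Fin.ext_iff, Fin.val_castSucc, Fin.val_succ] at * <;> omega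

def inversions {t : ℕ} (σ : Equiv.Perm (Fin t)) : Finset (Fin t × Fin t) :=
  univ.filter fun ij => ij.1 < ij.2 ∧ σ ij.2 < σ ij.1

@[simp]
theorem mem_inversions {t : ℕ} {σ : Equiv.Perm (Fin t)} {ij : Fin t × Fin t} :
    ij ∈ inversions σ ↔ ij.1 < ij.2 ∧ σ ij.2 < σ ij.1 := by
  simp [inversions]

theorem qSign_eq_prod_inversions {N t : ℕ} (q : Fin N → Fin N → ℂ) (g : Fin t → Fin N)
    (σ : Equiv.Perm (Fin t)) :
    qSign q g σ = ∏ ij ∈ inversions σ, -q (g (σ ij.2)) (g (σ ij.1)) := rfl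

theorem inversions_one {t : ℕ} : inversions (1 : Equiv.Perm (Fin t)) = ∅ :=
  filter_eq_empty_iff.2 fun _ _ h => lt_asymm h.1 h.2

section Descent

variable {t : ℕ} {σ : Equiv.Perm (Fin (t + 1))} {k : Fin t}

local notation "τ" => Equiv.swap (Fin.castSucc k) (Fin.succ k)

theorem inversions_eq_insert_map_of_succ_lt_castSucc (hk : σ k.succ < σ k.castSucc) :
    inversions σ = insert (k.castSucc, k.succ)
      ((inversions (σ * τ)).map (Equiv.prodCongr τ τ).toEmbedding) := by
  ext ⟨i, j⟩
  by_cases hij : i = k.castSucc ∧ j = k.succ ∨ i = k.succ ∧ j = k.castSucc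
  · rcases hij with ⟨rfl, rfl⟩ | ⟨rfl, rfl⟩ <;>
      simp [hk, lt_asymm hk, (Fin.castSucc_lt_succ (i := k)).ne']
  · have hne : ¬(i = k.castSucc ∧ j = k.succ) := fun h => hij (Or.inl h)
    simp [mem_map_equiv, Fin.swap_castSucc_succ_lt_swap_iff hij, hne]

theorem mk_castSucc_succ_notMem_map_inversions_mul_swap :
    (k.castSucc, k.succ) ∉ (inversions (σ * τ)).map (Equiv.prodCongr τ τ).toEmbedding := by
  simp [mem_map_equiv, lt_asymm (Fin.castSucc_lt_succ (i := k))]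

theorem qSign_eq_mul_qSign_mul_swap {N : ℕ} (q : Fin N → Fin N → ℂ) (g : Fin (t + 1) → Fin N)
    (hk : σ k.succ < σ k.castSucc) :
    qSign q g σ = -q (g (σ k.succ)) (g (σ k.castSucc)) * qSign q g (σ * τ) := by
  rw [qSign_eq_prod_inversions, inversions_eq_insert_map_of_succ_lt_castSucc hk,
    prod_insert mk_castSucc_succ_notMem_map_inversions_mul_swap, prod_map]
  simp [qSign_eq_prod_inversions]

theorem card_inversions_mul_swap_lt (hk : σ k.succ < σ k.castSucc) :
    #(inversions (σ * τ)) < #(inversions σ) := by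
  rw [inversions_eq_insert_map_of_succ_lt_castSucc hk,
    card_insert_of_notMem mk_castSucc_succ_notMem_map_inversions_mul_swap, card_map]
  exact Nat.lt_succ_self _

end Descent

namespace QExterior

variable {R : Type*} [Ring R] [Algebra ℂ R] {n : ℕ} {q : Fin n → Fin n → ℂ} {x : Fin n → R}

theorem ordProd_comp_eq_zero_of_monotone (hx : QExterior q x) {t : ℕ} {g : Fin t → Fin n}
    (hg : Monotone g) (hinj : ¬ Function.Injective g) : ordProd (x ∘ g) = 0 := by
  cases t with
  | zero => exact absurd (Function.injective_of_subsingleton g) hinj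
  | succ t =>
    obtain ⟨k, hk⟩ := hg.exists_castSucc_eq_succ hinj
    exact ordProd_eq_zero_of_mul_eq_zero k (by simp [hk, hx.1])

theorem ordProd_comp_perm (hx : QExterior q x) {t : ℕ} {g : Fin t → Fin n} (hg : Monotone g)
    (σ : Equiv.Perm (Fin t)) : ordProd (x ∘ g ∘ σ) = qSign q g σ • ordProd (x ∘ g) := by
  obtain ⟨N, hN⟩ : ∃ N, #(inversions σ) = N := ⟨_, rfl⟩
  induction N using Nat.strong_induction_on generalizing t with
  | _ N ih =>
    by_cases hσ : σ = 1
    · subst hσ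
      simp [qSign_eq_prod_inversions, inversions_one]
    rcases t with _ | t
    · exact absurd (Subsingleton.elim σ 1) hσ
    obtain ⟨k, hk⟩ := σ.exists_succ_lt_castSucc hσ
    rcases (hg hk.le).lt_or_eq with hlt | heq
    · set τ := Equiv.swap k.castSucc k.succ
      have hrel := hx.2 _ _ hlt
      have hcomp : (x ∘ g ∘ σ) ∘ τ = x ∘ g ∘ ⇑(σ * τ) := rfl
      rw [ordProd_eq_smul_comp_swap (x ∘ g ∘ σ) k _ hrel, hcomp,
        ih _ (hN ▸ card_inversions_mul_swap_lt hk) hg _ rfl, smul_smul,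
        ← qSign_eq_mul_qSign_mul_swap q g hk]
    -- equal adjacent factors: `x_i ^ 2 = 0` kills the left side, non-injectivity of `g` the right
    · rw [ordProd_eq_zero_of_mul_eq_zero k (by simp [heq, hx.1]),
        hx.ordProd_comp_eq_zero_of_monotone hg fun h => hk.ne (h heq), smul_zero]

theorem ordProd_comp_eq_zero_of_not_injective (hx : QExterior q x) {t : ℕ} {f : Fin t → Fin n}
    (hf : ¬ Function.Injective f) : ordProd (x ∘ f) = 0 := by
  have hsorted : Monotone (f ∘ Tuple.sort f) := Tuple.monotone_sort f
  have hf' : f = (f ∘ Tuple.sort f) ∘ ⇑(Tuple.sort f)⁻¹ := by ext; simp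
  rw [hf', hx.ordProd_comp_perm hsorted, hx.ordProd_comp_eq_zero_of_monotone hsorted, smul_zero]
  exact fun h => hf (hf' ▸ h.comp (Tuple.sort f)⁻¹.injective)

end QExterior

theorem sum_injective_eq_sum_strictMono_sum_perm {α M : Type*} [LinearOrder α] [Fintype α]
    [AddCommMonoid M] {t : ℕ} [DecidablePred (Function.Injective : (Fin t → α) → Prop)]
    [DecidablePred (StrictMono : (Fin t → α) → Prop)] (F : (Fin t → α) → M) :
    ∑ g ∈ univ.filter Function.Injective, F g =
      ∑ c ∈ univ.filter StrictMono, ∑ σ : Equiv.Perm (Fin t), F (c ∘ σ) := by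
  rw [← sum_product']
  refine sum_nbij' (fun g => (g ∘ Tuple.sort g, (Tuple.sort g)⁻¹)) (fun p => p.1 ∘ p.2)
    ?_ ?_ ?_ ?_ ?_
  · intro g hg
    have hmono := (Tuple.monotone_sort g).strictMono_of_injective
      ((mem_filter.1 hg).2.comp (Tuple.sort g).injective)
    exact mem_product.2 ⟨mem_filter.2 ⟨mem_univ _, hmono⟩, mem_univ _⟩
  · rintro ⟨c, σ⟩ hc
    have hc : StrictMono c := (mem_filter.1 (mem_product.1 hc).1).2
    exact mem_filter.2 ⟨mem_univ _, hc.injective.comp σ.injective⟩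
  · intro g _
    ext
    simp
  · rintro ⟨c, σ⟩ hc
    have hc : StrictMono c := (mem_filter.1 (mem_product.1 hc).1).2
    have hsort : σ⁻¹ = Tuple.sort (c ∘ σ) := Tuple.eq_sort_iff.2
      ⟨by simpa [Function.comp_assoc] using hc.monotone,
        fun i j hij h => absurd (σ.injective (hc.injective h)) (σ⁻¹.injective.ne hij.ne)⟩
    simp [← hsort, Function.comp_assoc]
  · intro g _
    congr
    ext
    simp

theorem delta_prod_minor_expansion_general {R : Type*} [Ring R] [Algebra ℂ R]
    {n : ℕ} (q : Fin n → Fin n → ℂ) (a : Fin n → Fin n → R)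
    (x : Fin n → R) (hx : QExterior q x)
    (hax : ∀ i j k, Commute (a i j) (x k))
    (δ : Fin n → R) (hδ : ∀ i, δ i = ∑ j, a i j * x j)
    (t : ℕ) (row : Fin t → Fin n) :
    ordProd (fun k => δ (row k)) =
      ∑ col ∈ Finset.univ.filter (fun col : Fin t → Fin n => StrictMono col),
        qMinor q row col a * ordProd (fun k => x (col k)) := by
  set F : (Fin t → Fin n) → R := fun g =>
    ordProd (fun k => a (row k) (g k)) * ordProd (x ∘ g)
  calc ordProd (fun k => δ (row k))
      = ∑ g : Fin t → Fin n, F g := by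
        simp only [hδ, ordProd_sum]
        exact sum_congr rfl fun g _ => ordProd_mul_of_commute _ _ fun k l => (hax _ _ _).symm
    _ = ∑ g ∈ univ.filter Function.Injective, F g :=
        (sum_filter_of_ne fun g _ hg => by_contra fun hinj =>
          hg (by simp only [F, hx.ordProd_comp_eq_zero_of_not_injective hinj, mul_zero])).symm
    _ = ∑ c ∈ univ.filter StrictMono, ∑ σ : Equiv.Perm (Fin t), F (c ∘ σ) :=
        sum_injective_eq_sum_strictMono_sum_perm F
    _ = _ := by
        refine sum_congr rfl fun c hc => ?_
        simp only [F, hx.ordProd_comp_perm (mem_filter.1 hc).2.monotone, mul_smul_comm, qMinor,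
          sum_mul, smul_mul_assoc]
        rfl

/-- `δ_{i_1} ⋯ δ_{i_t} = Σ_{j_1 < ⋯ < j_t} det_q(A^{i_1…i_t}_{j_1…j_t})
x_{j_1} ⋯ x_{j_t}`. -/
theorem delta_prod_minor_expansion {R : Type*} [Ring R] [Algebra ℂ R]
    {n : ℕ} (lam : ℂ)
    (p q : Fin n → Fin n → ℂ) (hpq : ParamConds p q) (hpl : PLambdaCond p q lam)
    (a : Fin n → Fin n → R) (ha : IsQuantumMatrix p q a)
    (x : Fin n → R) (hx : QExterior q x)
    (hax : ∀ i j k, Commute (a i j) (x k))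
    (δ : Fin n → R) (hδ : ∀ i, δ i = ∑ j, a i j * x j)
    (t : ℕ) (row : Fin t → Fin n) :
    ordProd (fun k => δ (row k)) =
      ∑ col ∈ Finset.univ.filter (fun col : Fin t → Fin n => StrictMono col),
        qMinor q row col a * ordProd (fun k => x (col k)) :=
  delta_prod_minor_expansion_general q a x hx hax δ hδ t row
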